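/- (Exact characterization of feasibility) The load-coupling system ρ = f(ρ) has a nonnegative solution if and only if the linear system ρ = h⁰(ρ) has a nonnegative solution. -/

import Mathlib

/-!
Write `ψ x = 1 / ln (1 + 1 / x)` (`invRate`) and `s_ij ρ = ∑_{k ≠ i} b_ikj ρ_k`. Then
`f_i ρ = ∑_j (ln 2 / a_ij) ψ (s_ij ρ + c_ij)` and `h⁰_i ρ = ∑_j (ln 2 / a_ij) (ψ c_ij + s_ij ρ)`.
The function `ψ x - x` is nondecreasing on `(0, ∞)`, because the logarithmic mean of `x` and
`x + 1` dominates their geometric mean; hence `h⁰ ≤ f` on the nonnegative orthant. Moreover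
`ψ x ≤ x + 1`. Both maps are monotone there, so by Knaster–Tarski on an order interval `[0, t]`
each has a nonnegative fixed point as soon as it maps some `t ≥ 0` below itself. A solution of
`ρ = f ρ` satisfies `h⁰ ρ ≤ ρ`; a solution of `ρ = h⁰ ρ` satisfies `f (λ ρ) ≤ λ ρ` once
`c_ij + 1 ≤ λ ψ c_ij` for all pixels, since `ψ (x + c) ≤ x + c + 1`.
-/

open Real Set

theorem exists_fixedPoint_of_monotoneOn_Icc {α : Type*} [ConditionallyCompleteLattice α]
    {F : α → α} {a b : α} (hab : a ≤ b) (hF : MonotoneOn F (Icc a b))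
    (ha : a ≤ F a) (hb : F b ≤ b) : ∃ x ∈ Icc a b, F x = x := by
  have : Fact (a ≤ b) := ⟨hab⟩
  have hmaps (x : α) (hx : x ∈ Icc a b) : F x ∈ Icc a b :=
    ⟨ha.trans (hF ⟨le_rfl, hab⟩ hx hx.1), (hF hx ⟨hab, le_rfl⟩ hx.2).trans hb⟩
  let G : Icc a b →o Icc a b :=
    ⟨fun x => ⟨F x, hmaps x x.2⟩, fun x y hxy => hF x.2 y.2 hxy⟩
  exact ⟨G.lfp, G.lfp.2, congrArg Subtype.val G.map_lfp⟩

theorem two_mul_log_le_sub_inv {v : ℝ} (hv : 1 ≤ v) : 2 * log v ≤ v - v⁻¹ := by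
  have h := Real.self_le_sinh_iff.2 (Real.log_nonneg hv)
  rw [Real.sinh_log (by linarith)] at h
  linarith

-- The logarithmic mean of `y` and `y + 1` is at least their geometric mean.
theorem log_one_add_inv_sq_mul_le {y : ℝ} (hy : 0 < y) :
    log (1 + 1 / y) ^ 2 * (y * (y + 1)) ≤ 1 := by
  set v := √((y + 1) / y)
  have hv_sq : v ^ 2 = (y + 1) / y := Real.sq_sqrt (by positivity)
  have hv : 1 ≤ v := Real.one_le_sqrt.2 (by rw [le_div_iff₀ hy]; linarith)
  have hlog : log (1 + 1 / y) = 2 * log v := by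
    rw [Real.log_sqrt (by positivity), ← one_add_div hy.ne']; ring_nf
  have hdiff : (v - v⁻¹) ^ 2 * (y * (y + 1)) = 1 := by
    have : v ≠ 0 := by positivity
    have e : (v - v⁻¹) ^ 2 = v ^ 2 - 2 + (v ^ 2)⁻¹ := by field_simp; ring
    rw [e, hv_sq]; field_simp; ring
  calc log (1 + 1 / y) ^ 2 * (y * (y + 1)) ≤ (v - v⁻¹) ^ 2 * (y * (y + 1)) := by
        rw [hlog]
        gcongr
        · exact mul_nonneg zero_le_two (log_nonneg hv)
        · exact two_mul_log_le_sub_inv hv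
    _ = 1 := hdiff

noncomputable def invRate (x : ℝ) : ℝ := (log (1 + 1 / x))⁻¹

theorem log_one_add_inv_pos {x : ℝ} (hx : 0 < x) : 0 < log (1 + 1 / x) :=
  log_pos (by simp [hx])

theorem invRate_pos {x : ℝ} (hx : 0 < x) : 0 < invRate x :=
  inv_pos.2 (log_one_add_inv_pos hx)

theorem hasDerivAt_invRate {y : ℝ} (hy : 0 < y) :
    HasDerivAt invRate ((y * (y + 1))⁻¹ / log (1 + 1 / y) ^ 2) y := by
  have hu : HasDerivAt (fun y : ℝ => 1 + 1 / y) (-(y ^ 2)⁻¹) y := by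
    simpa using (hasDerivAt_inv hy.ne').const_add 1
  have hlog := (Real.hasDerivAt_log (by positivity : (1 + 1 / y) ≠ 0)).comp y hu
  refine (hlog.inv (log_one_add_inv_pos hy).ne').congr_deriv ?_
  simp only [Function.comp_apply]
  field_simp

theorem monotoneOn_invRate_sub_id : MonotoneOn (fun y => invRate y - y) (Ioi 0) := by
  have hderiv (y : ℝ) (hy : y ∈ Ioi (0 : ℝ)) :
      HasDerivAt (fun y => invRate y - y) ((y * (y + 1))⁻¹ / log (1 + 1 / y) ^ 2 - 1) y :=
    (hasDerivAt_invRate hy).sub (hasDerivAt_id y)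
  refine monotoneOn_of_deriv_nonneg (convex_Ioi 0)
    (fun y hy => (hderiv y hy).continuousAt.continuousWithinAt)
    (fun y hy => (hderiv y (interior_subset hy)).differentiableAt.differentiableWithinAt)
    (fun y hy => ?_)
  rw [interior_Ioi, mem_Ioi] at hy
  rw [(hderiv y hy).deriv, sub_nonneg, one_le_div₀ (pow_pos (log_one_add_inv_pos hy) 2),
    ← one_div, le_div_iff₀ (by positivity)]
  exact log_one_add_inv_sq_mul_le hy

theorem invRate_add_le {c t : ℝ} (hc : 0 < c) (ht : 0 ≤ t) : invRate c + t ≤ invRate (c + t) := by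
  have := monotoneOn_invRate_sub_id (mem_Ioi.2 hc) (mem_Ioi.2 (by linarith))
    (le_add_of_nonneg_right ht)
  simp only at this
  linarith

theorem invRate_le_invRate {x y : ℝ} (hx : 0 < x) (hxy : x ≤ y) : invRate x ≤ invRate y := by
  have := invRate_add_le hx (sub_nonneg.2 hxy)
  rw [add_sub_cancel] at this
  linarith

theorem invRate_le_add_one {x : ℝ} (hx : 0 < x) : invRate x ≤ x + 1 := by
  have h := Real.one_sub_inv_le_log_of_pos (by positivity : 0 < 1 + 1 / x)
  have e : 1 - (1 + 1 / x)⁻¹ = (x + 1)⁻¹ := by field_simp; ring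
  rw [e] at h
  rw [invRate, inv_le_comm₀ (log_one_add_inv_pos hx) (by positivity)]
  exact h

section LoadCoupling

variable {ι P : Type*} [Fintype ι]

theorem exists_add_one_le_mul_invRate {J : ι → Finset P} {c : ι → P → ℝ}
    (hc : ∀ i, ∀ j ∈ J i, 0 < c i j) :
    ∃ t : ℝ, 0 ≤ t ∧ ∀ i, ∀ j ∈ J i, c i j + 1 ≤ t * invRate (c i j) := by
  set t := ∑ i, ∑ j ∈ J i, (c i j + 1) / invRate (c i j)
  have hterm (i : ι) (j : P) (hj : j ∈ J i) : 0 ≤ (c i j + 1) / invRate (c i j) := by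
    have := hc i j hj; have := invRate_pos (hc i j hj); positivity
  have hle (i : ι) (j : P) (hj : j ∈ J i) : (c i j + 1) / invRate (c i j) ≤ t :=
    (Finset.single_le_sum (fun j hj => hterm i j hj) hj).trans
      (Finset.single_le_sum (f := fun i => ∑ j ∈ J i, (c i j + 1) / invRate (c i j))
        (fun i _ => Finset.sum_nonneg (hterm i)) (Finset.mem_univ i))
  refine ⟨t, Finset.sum_nonneg fun i _ => Finset.sum_nonneg (hterm i), fun i j hj => ?_⟩
  rw [← div_le_iff₀ (invRate_pos (hc i j hj))]
  exact hle i j hj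

variable [DecidableEq ι]

def interference (b : ι → ι → P → ℝ) (ρ : ι → ℝ) (i : ι) (j : P) : ℝ :=
  ∑ k ∈ Finset.univ.erase i, b i k j * ρ k

noncomputable def cellLoad (J : ι → Finset P) (w c : ι → P → ℝ) (b : ι → ι → P → ℝ)
    (ρ : ι → ℝ) : ι → ℝ :=
  fun i => ∑ j ∈ J i, w i j * invRate (interference b ρ i j + c i j)

noncomputable def linearLoad (J : ι → Finset P) (w c : ι → P → ℝ) (b : ι → ι → P → ℝ)
    (ρ : ι → ℝ) : ι → ℝ :=
  fun i => ∑ j ∈ J i, w i j * (invRate (c i j) + interference b ρ i j)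

variable {J : ι → Finset P} {w c : ι → P → ℝ} {b : ι → ι → P → ℝ}

theorem interference_mono (hb : ∀ i k, k ≠ i → ∀ j ∈ J i, 0 ≤ b i k j) {ρ ρ' : ι → ℝ}
    (hρ : ρ ≤ ρ') {i : ι} {j : P} (hj : j ∈ J i) : interference b ρ i j ≤ interference b ρ' i j :=
  Finset.sum_le_sum fun k hk =>
    mul_le_mul_of_nonneg_left (hρ k) (hb i k (Finset.ne_of_mem_erase hk) j hj)

theorem interference_nonneg (hb : ∀ i k, k ≠ i → ∀ j ∈ J i, 0 ≤ b i k j) {ρ : ι → ℝ}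
    (hρ : 0 ≤ ρ) {i : ι} {j : P} (hj : j ∈ J i) : 0 ≤ interference b ρ i j := by
  simpa [interference] using interference_mono hb hρ hj

theorem interference_smul (t : ℝ) (ρ : ι → ℝ) (i : ι) (j : P) :
    interference b (t • ρ) i j = t * interference b ρ i j := by
  simp only [interference, Finset.mul_sum, Pi.smul_apply, smul_eq_mul]
  exact Finset.sum_congr rfl fun k _ => by ring

theorem monotone_linearLoad (hw : ∀ i, ∀ j ∈ J i, 0 ≤ w i j)
    (hb : ∀ i k, k ≠ i → ∀ j ∈ J i, 0 ≤ b i k j) : Monotone (linearLoad J w c b) :=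
  fun _ _ hρ i => Finset.sum_le_sum fun j hj =>
    mul_le_mul_of_nonneg_left (add_le_add_right (interference_mono hb hρ hj) _) (hw i j hj)

theorem monotoneOn_cellLoad (hw : ∀ i, ∀ j ∈ J i, 0 ≤ w i j) (hc : ∀ i, ∀ j ∈ J i, 0 < c i j)
    (hb : ∀ i k, k ≠ i → ∀ j ∈ J i, 0 ≤ b i k j) : MonotoneOn (cellLoad J w c b) (Ici 0) :=
  fun _ hρ _ _ hρρ' i => Finset.sum_le_sum fun j hj =>
    mul_le_mul_of_nonneg_left
      (invRate_le_invRate (add_pos_of_nonneg_of_pos (interference_nonneg hb hρ hj) (hc i j hj))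
        (add_le_add_left (interference_mono hb hρρ' hj) _))
      (hw i j hj)

theorem linearLoad_zero_nonneg (hw : ∀ i, ∀ j ∈ J i, 0 ≤ w i j)
    (hc : ∀ i, ∀ j ∈ J i, 0 < c i j) : 0 ≤ linearLoad J w c b 0 :=
  fun i => Finset.sum_nonneg fun j hj => by
    simpa [interference] using mul_nonneg (hw i j hj) (invRate_pos (hc i j hj)).le

theorem linearLoad_le_cellLoad (hw : ∀ i, ∀ j ∈ J i, 0 ≤ w i j) (hc : ∀ i, ∀ j ∈ J i, 0 < c i j)
    (hb : ∀ i k, k ≠ i → ∀ j ∈ J i, 0 ≤ b i k j) {ρ : ι → ℝ} (hρ : 0 ≤ ρ) :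
    linearLoad J w c b ρ ≤ cellLoad J w c b ρ :=
  fun i => Finset.sum_le_sum fun j hj => mul_le_mul_of_nonneg_left (by
    rw [add_comm (interference b ρ i j)]
    exact invRate_add_le (hc i j hj) (interference_nonneg hb hρ hj)) (hw i j hj)

theorem cellLoad_smul_le (hw : ∀ i, ∀ j ∈ J i, 0 ≤ w i j) (hc : ∀ i, ∀ j ∈ J i, 0 < c i j)
    (hb : ∀ i k, k ≠ i → ∀ j ∈ J i, 0 ≤ b i k j) {t : ℝ} (ht : 0 ≤ t)
    (htc : ∀ i, ∀ j ∈ J i, c i j + 1 ≤ t * invRate (c i j)) {ρ : ι → ℝ} (hρ : 0 ≤ ρ) :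
    cellLoad J w c b (t • ρ) ≤ t • linearLoad J w c b ρ := by
  intro i
  simp only [cellLoad, linearLoad, Pi.smul_apply, smul_eq_mul, Finset.mul_sum]
  refine Finset.sum_le_sum fun j hj => ?_
  have hI := interference_nonneg hb (smul_nonneg ht hρ) hj
  calc w i j * invRate (interference b (t • ρ) i j + c i j)
      ≤ w i j * (interference b (t • ρ) i j + c i j + 1) :=
        mul_le_mul_of_nonneg_left (invRate_le_add_one (by linarith [hc i j hj])) (hw i j hj)
    _ ≤ w i j * (interference b (t • ρ) i j + t * invRate (c i j)) := by
        have := htc i j hj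
        gcongr ?_ * ?_
        · exact hw i j hj
        · linarith
    _ = t * (w i j * (invRate (c i j) + interference b ρ i j)) := by
        rw [interference_smul]; ring

theorem exists_fixedPoint_cellLoad_iff (hw : ∀ i, ∀ j ∈ J i, 0 ≤ w i j)
    (hc : ∀ i, ∀ j ∈ J i, 0 < c i j) (hb : ∀ i k, k ≠ i → ∀ j ∈ J i, 0 ≤ b i k j) :
    (∃ ρ, 0 ≤ ρ ∧ cellLoad J w c b ρ = ρ) ↔ (∃ ρ, 0 ≤ ρ ∧ linearLoad J w c b ρ = ρ) := by
  have h0 := linearLoad_zero_nonneg (b := b) hw hc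
  constructor
  · rintro ⟨ρ, hρ, hfix⟩
    obtain ⟨x, hx, hxfix⟩ := exists_fixedPoint_of_monotoneOn_Icc hρ
      ((monotone_linearLoad hw hb).monotoneOn _) h0
      ((linearLoad_le_cellLoad hw hc hb hρ).trans_eq hfix)
    exact ⟨x, hx.1, hxfix⟩
  · rintro ⟨ρ, hρ, hfix⟩
    obtain ⟨t, ht, htc⟩ := exists_add_one_le_mul_invRate hc
    obtain ⟨x, hx, hxfix⟩ := exists_fixedPoint_of_monotoneOn_Icc (smul_nonneg ht hρ)
      ((monotoneOn_cellLoad hw hc hb).mono fun y hy => hy.1)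
      (h0.trans (linearLoad_le_cellLoad hw hc hb le_rfl))
      ((cellLoad_smul_le hw hc hb ht htc hρ).trans_eq (by rw [hfix]))
    exact ⟨x, hx.1, hxfix⟩

end LoadCoupling

theorem stmt_16_general
    (n : ℕ)
    (J : Fin n → Finset ℕ)
    (a c : Fin n → ℕ → ℝ) (b : Fin n → Fin n → ℕ → ℝ)
    (ha : ∀ i, ∀ j ∈ J i, 0 < a i j)
    (hc : ∀ i, ∀ j ∈ J i, 0 < c i j)
    (hb : ∀ i k, k ≠ i → ∀ j ∈ J i, 0 < b i k j)
    (f : Fin n → (Fin n → ℝ) → ℝ)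
    (hf : ∀ i ρ, f i ρ =
      ∑ j ∈ J i, 1 / (a i j * Real.logb 2
        (1 + 1 / (∑ k ∈ Finset.univ.erase i, b i k j * ρ k + c i j))))
    (H : Fin n → Fin n → ℝ)
    (hH : ∀ i k, H i k = Real.log 2 * ∑ j ∈ J i, b i k j / a i j)
    (h0 : Fin n → (Fin n → ℝ) → ℝ)
    (hh0 : ∀ i ρ, h0 i ρ =
      f i 0 + ∑ k ∈ Finset.univ.erase i, H i k * ρ k) :
    (∃ ρ : Fin n → ℝ, (∀ i, 0 ≤ ρ i) ∧ ∀ i, f i ρ = ρ i) ↔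
    (∃ ρ : Fin n → ℝ, (∀ i, 0 ≤ ρ i) ∧ ∀ i, h0 i ρ = ρ i) := by
  set w : Fin n → ℕ → ℝ := fun i j => log 2 / a i j
  have hf_eq (ρ : Fin n → ℝ) : (fun i => f i ρ) = cellLoad J w c b ρ := by
    ext i
    rw [hf, cellLoad]
    refine Finset.sum_congr rfl fun j _ => ?_
    rw [logb, one_div, mul_inv, inv_div, invRate, interference]
    ring
  have hH_eq (ρ : Fin n → ℝ) (i : Fin n) :
      ∑ k ∈ Finset.univ.erase i, H i k * ρ k = ∑ j ∈ J i, w i j * interference b ρ i j := by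
    simp only [hH, interference, Finset.mul_sum, Finset.sum_mul]
    rw [Finset.sum_comm]
    exact Finset.sum_congr rfl fun j _ => Finset.sum_congr rfl fun k _ => by ring
  have hh0_eq (ρ : Fin n → ℝ) : (fun i => h0 i ρ) = linearLoad J w c b ρ := by
    ext i
    have hf0 := congrFun (hf_eq 0) i
    simp only [cellLoad, interference, Pi.zero_apply, mul_zero, Finset.sum_const_zero,
      zero_add] at hf0
    rw [hh0, hf0, hH_eq, linearLoad, ← Finset.sum_add_distrib]
    exact Finset.sum_congr rfl fun j _ => by ring
  have key := exists_fixedPoint_cellLoad_iff (J := J) (w := w) (c := c) (b := b)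
    (fun i j hj => div_nonneg (log_nonneg one_le_two) (ha i j hj).le) hc
    (fun i k hki j hj => (hb i k hki j hj).le)
  simpa only [← hf_eq, ← hh0_eq, Pi.le_def, Pi.zero_apply, funext_iff] using key

/-- Exact characterization of feasibility: the load-coupling system `ρ = f(ρ)`
has a nonnegative solution iff the linear system `ρ = h⁰(ρ)` does. -/
theorem stmt_16
    (n : ℕ) (hn : 2 ≤ n)
    (J : Fin n → Finset ℕ) (hJ : ∀ i, (J i).Nonempty)
    (a c : Fin n → ℕ → ℝ) (b : Fin n → Fin n → ℕ → ℝ)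
    (ha : ∀ i, ∀ j ∈ J i, 0 < a i j)
    (hc : ∀ i, ∀ j ∈ J i, 0 < c i j)
    (hb : ∀ i k, k ≠ i → ∀ j ∈ J i, 0 < b i k j)
    (f : Fin n → (Fin n → ℝ) → ℝ)
    (hf : ∀ i ρ, f i ρ =
      ∑ j ∈ J i, 1 / (a i j * Real.logb 2
        (1 + 1 / (∑ k ∈ Finset.univ.erase i, b i k j * ρ k + c i j))))
    (H : Fin n → Fin n → ℝ)
    (hH : ∀ i k, H i k = Real.log 2 * ∑ j ∈ J i, b i k j / a i j)
    (h0 : Fin n → (Fin n → ℝ) → ℝ)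
    (hh0 : ∀ i ρ, h0 i ρ =
      f i 0 + ∑ k ∈ Finset.univ.erase i, H i k * ρ k) :
    (∃ ρ : Fin n → ℝ, (∀ i, 0 ≤ ρ i) ∧ ∀ i, f i ρ = ρ i) ↔
    (∃ ρ : Fin n → ℝ, (∀ i, 0 ≤ ρ i) ∧ ∀ i, h0 i ρ = ρ i) :=
  stmt_16_general n J a c b ha hc hb f hf H hH h0 hh0
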